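/- Let d be an even positive integer, δ ≤ d/4 a positive integer, a and L positive integers with d = aL and 1 ≤ a < δ, b > 4, let m_1,…,m_{2δ−1} be the windowed Fourier masks, let 0 < p ≤ q, and set s := e^{−1/b}. Then for all 1 ≤ k ≤ 2δ−1 and 1 ≤ ℓ ≤ L: (i) |⟨S_{ℓa}m_k, x^{±}⟩| ≤ q·(2δ−1)^{−1/4}·s/(1−s); and (ii) if 1 + ℓa ≤ d − δ < δ + ℓa, then | |⟨S_{ℓa}m_k, x⁺⟩| − |⟨S_{ℓa}m_k, x⁻⟩| | ≤ 2p·(2δ−1)^{−1/4}·s/(1−s). -/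

import Mathlib

open scoped BigOperators

noncomputable section

/-- Map an integer to `Fin d` by reduction mod `d` (requires `0 < d`). -/
def intToFin (d : ℕ) (hd : 0 < d) (z : ℤ) : Fin d :=
  ⟨(z % (d : ℤ)).toNat, by
    have h1 : 0 ≤ z % (d : ℤ) := Int.emod_nonneg z (by exact_mod_cast hd.ne')
    have h2 : z % (d : ℤ) < (d : ℤ) := Int.emod_lt_of_pos z (by exact_mod_cast hd)
    omega⟩

/-- Circular shift: `(S_ℓ x)(n) = x(((n + ℓ - 1) mod d) + 1)` in 1-based indexing. -/
def shift {d : ℕ} (ℓ : ℤ) (x : Fin d → ℂ) : Fin d → ℂ :=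
  fun i => x (intToFin d i.pos ((i : ℤ) + ℓ))

/-- `⟨u,v⟩ = ∑ u(n) conj(v(n))`. -/
def innerC {d : ℕ} (u v : Fin d → ℂ) : ℂ := ∑ n, u n * (starRingEnd ℂ) (v n)

/-- `x ∼ x'` iff `x = e^{iθ} x'` for some real `θ`. -/
def phaseEquiv {d : ℕ} (x x' : Fin d → ℂ) : Prop :=
  ∃ θ : ℝ, x = fun n => Complex.exp (θ * Complex.I) * x' n

/-- Euclidean norm on `ℂ^d`. -/
def norm2 {d : ℕ} (x : Fin d → ℂ) : ℝ := Real.sqrt (∑ n, ‖x n‖ ^ 2)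

/-- `D₂(x,x') = min_θ ‖x - e^{iθ} x'‖₂`. -/
def D2 {d : ℕ} (x x' : Fin d → ℂ) : ℝ :=
  ⨅ θ : ℝ, norm2 (fun n => x n - Complex.exp (θ * Complex.I) * x' n)

/-- `C_{p,q} = {x : p ≤ |x(n)| ≤ q for all n}`. -/
def Cpq (d : ℕ) (p q : ℝ) : Set (Fin d → ℂ) :=
  {x | ∀ n, p ≤ ‖x n‖ ∧ ‖x n‖ ≤ q}

/-- `‖m‖_∞ = max_k ‖m_k‖_∞`. -/
def maskSup {d K : ℕ} (m : Fin K → Fin d → ℂ) : ℝ :=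
  ⨆ k, ⨆ n, ‖m k n‖

/-- The measurement map `Z(x)_{k,ℓ} = |⟨S_{ℓa} m_k, x⟩|`, `1 ≤ k ≤ K`, `1 ≤ ℓ ≤ L`. -/
def Zmap {d K : ℕ} (L : ℕ) (m : Fin K → Fin d → ℂ) (a : ℕ) (x : Fin d → ℂ) :
    EuclideanSpace ℝ (Fin K × Fin L) :=
  WithLp.toLp 2 fun kl => ‖innerC (shift ((((kl.2 : ℕ) + 1) * a : ℕ) : ℤ) (m kl.1)) x‖

/-- The measurement map `Y(x)_{k,ℓ} = |⟨S_{ℓa} m_k, x⟩|²`. -/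
def Ymap {d K : ℕ} (L : ℕ) (m : Fin K → Fin d → ℂ) (a : ℕ) (x : Fin d → ℂ) :
    EuclideanSpace ℝ (Fin K × Fin L) :=
  WithLp.toLp 2 fun kl => ‖innerC (shift ((((kl.2 : ℕ) + 1) * a : ℕ) : ℤ) (m kl.1)) x‖ ^ 2

/-- The vectors `x^{±}` (sign `ε = ±1`): `q` on positions `1,…,d/2-δ`, `p` on
`d/2-δ+1,…,d/2`, `±q` on `d/2+1,…,d-δ`, and `p` on `d-δ+1,…,d`. -/
def xpm (d δ : ℕ) (p q ε : ℝ) : Fin d → ℂ :=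
  fun i => if (i : ℕ) < d / 2 - δ then (q : ℂ)
    else if (i : ℕ) < d / 2 then (p : ℂ)
    else if (i : ℕ) < d - δ then ((ε * q : ℝ) : ℂ)
    else (p : ℂ)

/-- The difference of outer products `x x^* - x' x'^*`. -/
def outerDiff {d : ℕ} (x x' : Fin d → ℂ) : Matrix (Fin d) (Fin d) ℂ :=
  Matrix.of fun i j => x i * star (x j) - x' i * star (x' j)

lemma outerDiff_isHermitian {d : ℕ} (x x' : Fin d → ℂ) :
    (outerDiff x x').IsHermitian := by
  unfold Matrix.IsHermitian
  ext i j
  simp [outerDiff, Matrix.conjTranspose_apply, star_sub, star_mul, star_star, mul_comm]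

/-- `d₁(x,x') = ‖x x^* - x' x'^*‖₁`, the sum of the singular values (for a Hermitian
matrix, the sum of the absolute values of its eigenvalues). -/
def d1 {d : ℕ} (x x' : Fin d → ℂ) : ℝ :=
  ∑ i, |(outerDiff_isHermitian x x').eigenvalues i|

/-- The windowed Fourier masks: `m_k(n) = e^{-n/b} (2δ-1)^{-1/4} e^{2πi(k-1)(n-1)/(2δ-1)}`
for `1 ≤ n ≤ δ`, and `0` for `δ < n ≤ d` (the 0-based indices `k, n` stand for `k-1, n-1`). -/
def fourierMask (d δ : ℕ) (b : ℝ) : Fin (2 * δ - 1) → Fin d → ℂ :=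
  fun k n =>
    if (n : ℕ) < δ then
      ((Real.exp (-(((n : ℕ) : ℝ) + 1) / b) * ((2 * δ - 1 : ℕ) : ℝ) ^ (-(1 : ℝ) / 4) : ℝ) : ℂ) *
        Complex.exp (2 * (Real.pi : ℂ) * Complex.I * ((k : ℕ) : ℂ) * ((n : ℕ) : ℂ) /
          ((2 * δ - 1 : ℕ) : ℂ))
    else 0

/-! Each measurement is at most the sup of `|x|` over the support of the shifted mask times
the `ℓ¹` norm of the mask, and that norm is at most `(2δ-1)^{-1/4} ∑_{n ≥ 1} sⁿ`.
For (ii), the condition on `ℓa` puts the support of `S_{ℓa} m_k` in an interval of length `δ`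
starting between `δ + 1` and `2δ`: either that interval lies in the first half, where
`x⁺ = x⁻`, or it starts after `d/2 - δ`, where `x⁺ + x⁻` takes only the values `2p`
and `0`, and then `| |A| - |B| | ≤ |A + B|` with `A + B = ⟨S_{ℓa} m_k, x⁺ + x⁻⟩`. -/

open Finset

section InnerC

variable {d : ℕ}

theorem innerC_add_right (u x y : Fin d → ℂ) :
    innerC u (x + y) = innerC u x + innerC u y := by
  simp only [innerC, Pi.add_apply, map_add, mul_add, sum_add_distrib]

theorem innerC_congr_right {u x y : Fin d → ℂ} (h : ∀ i, u i ≠ 0 → x i = y i) :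
    innerC u x = innerC u y := by
  refine sum_congr rfl fun i _ => ?_
  by_cases hi : u i = 0
  · simp [hi]
  · rw [h i hi]

theorem norm_innerC_le {u x : Fin d → ℂ} {M : ℝ} (h : ∀ i, u i ≠ 0 → ‖x i‖ ≤ M) :
    ‖innerC u x‖ ≤ M * ∑ i, ‖u i‖ := by
  rw [mul_sum]
  refine (norm_sum_le _ _).trans (sum_le_sum fun i _ => ?_)
  rw [norm_mul, Complex.norm_conj, mul_comm M]
  by_cases hi : u i = 0
  · simp [hi]
  · exact mul_le_mul_of_nonneg_left (h i hi) (norm_nonneg _)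

theorem abs_norm_innerC_sub_norm_innerC_le {u x y : Fin d → ℂ} {M : ℝ}
    (h : ∀ i, u i ≠ 0 → ‖x i + y i‖ ≤ M) :
    |‖innerC u x‖ - ‖innerC u y‖| ≤ M * ∑ i, ‖u i‖ :=
  calc |‖innerC u x‖ - ‖innerC u y‖| ≤ ‖innerC u x + innerC u y‖ := by
        simpa using abs_norm_sub_norm_le (innerC u x) (-innerC u y)
    _ = ‖innerC u (x + y)‖ := by rw [innerC_add_right]
    _ ≤ M * ∑ i, ‖u i‖ := norm_innerC_le h

end InnerC

section Shift

variable {d : ℕ}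

theorem intToFin_natCast (n : ℕ) (hd : 0 < d) : (intToFin d hd n : ℕ) = n % d := by
  show ((n : ℤ) % d).toNat = n % d
  rw [← Int.natCast_mod, Int.toNat_natCast]

theorem intToFin_add (i : Fin d) (ℓ : ℤ) (hd : 0 < d) :
    intToFin d hd (i + ℓ) = i + intToFin d hd ℓ := by
  have hd' : (d : ℤ) ≠ 0 := by exact_mod_cast hd.ne'
  ext
  zify [Fin.val_add]
  simp only [intToFin, Int.toNat_of_nonneg (Int.emod_nonneg _ hd'), Int.add_emod_emod]

theorem shift_apply (ℓ : ℤ) (x : Fin d → ℂ) (i : Fin d) :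
    shift ℓ x i = x (i + intToFin d i.pos ℓ) := by
  rw [shift, intToFin_add]

theorem sum_norm_shift [NeZero d] (ℓ : ℤ) (x : Fin d → ℂ) :
    ∑ i, ‖shift ℓ x i‖ = ∑ i, ‖x i‖ := by
  simp only [shift_apply]
  exact Equiv.sum_comp (Equiv.addRight (intToFin d (NeZero.pos d) ℓ)) (‖x ·‖)

theorem mem_Ico_of_shift_ne_zero {δ w : ℕ} {x : Fin d → ℂ}
    (hx : ∀ j : Fin d, δ ≤ j → x j = 0) (hδw : δ ≤ w) (hwd : w ≤ d) {i : Fin d}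
    (hi : shift w x i ≠ 0) :
    d - w ≤ i ∧ (i : ℕ) < d - w + δ := by
  have hlt : (i + w) % d < δ := by
    by_contra! hge
    exact hi (hx _ (by rwa [← Nat.cast_add, intToFin_natCast]))
  have hid := i.isLt
  rcases lt_or_ge ((i : ℕ) + w) d with hsmall | hbig
  · rw [Nat.mod_eq_of_lt hsmall] at hlt
    omega
  · rw [Nat.mod_eq_sub_mod hbig, Nat.mod_eq_of_lt (by omega)] at hlt
    omega

end Shift

section FourierMask

theorem sum_range_pow_succ_le {s : ℝ} (hs0 : 0 ≤ s) (hs1 : s < 1) (n : ℕ) :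
    ∑ i ∈ range n, s ^ (i + 1) ≤ s / (1 - s) := by
  simpa [sum_Ico_eq_sum_range, add_comm] using
    geom_sum_Ico_le_of_lt_one (m := 1) (n := n + 1) hs0 hs1

variable {d δ : ℕ} {b : ℝ}

theorem fourierMask_eq_zero (k : Fin (2 * δ - 1)) {j : Fin d} (hj : δ ≤ j) :
    fourierMask d δ b k j = 0 :=
  if_neg (not_lt.mpr hj)

theorem norm_fourierMask_le (k : Fin (2 * δ - 1)) (j : Fin d) :
    ‖fourierMask d δ b k j‖
      ≤ ((2 * δ - 1 : ℕ) : ℝ) ^ (-(1 : ℝ) / 4) * Real.exp (-1 / b) ^ ((j : ℕ) + 1) := by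
  unfold fourierMask
  split_ifs
  · rw [norm_mul, Complex.norm_real, Real.norm_of_nonneg (by positivity), mul_comm,
      ← Real.exp_nat_mul, Complex.norm_exp]
    have hre : (2 * (Real.pi : ℂ) * Complex.I * ((k : ℕ) : ℂ) * ((j : ℕ) : ℂ) /
        ((2 * δ - 1 : ℕ) : ℂ)).re = 0 := by
      simp [Complex.div_re]
    rw [hre, Real.exp_zero, one_mul]
    exact le_of_eq (by push_cast; ring_nf)
  · rw [norm_zero]
    positivity

theorem sum_norm_fourierMask_le (hb : 0 < b) (k : Fin (2 * δ - 1)) :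
    ∑ j : Fin d, ‖fourierMask d δ b k j‖
      ≤ ((2 * δ - 1 : ℕ) : ℝ) ^ (-(1 : ℝ) / 4)
          * (Real.exp (-1 / b) / (1 - Real.exp (-1 / b))) := by
  have hs1 : Real.exp (-1 / b) < 1 :=
    Real.exp_lt_one_iff.mpr (div_neg_of_neg_of_pos (by norm_num) hb)
  calc ∑ j : Fin d, ‖fourierMask d δ b k j‖
      ≤ ∑ j : Fin d,
          ((2 * δ - 1 : ℕ) : ℝ) ^ (-(1 : ℝ) / 4) * Real.exp (-1 / b) ^ ((j : ℕ) + 1) :=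
        sum_le_sum fun j _ => norm_fourierMask_le k j
    _ = ((2 * δ - 1 : ℕ) : ℝ) ^ (-(1 : ℝ) / 4)
          * ∑ j ∈ range d, Real.exp (-1 / b) ^ (j + 1) := by
        rw [← mul_sum, Fin.sum_univ_eq_sum_range (fun j => Real.exp (-1 / b) ^ (j + 1))]
    _ ≤ _ := by
        gcongr
        exact sum_range_pow_succ_le (Real.exp_pos _).le hs1 d

end FourierMask

section Xpm

variable {d δ : ℕ} {p q : ℝ}

theorem norm_xpm_le (hp : 0 ≤ p) (hpq : p ≤ q) {ε : ℝ} (hε : |ε| = 1) (i : Fin d) :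
    ‖xpm d δ p q ε i‖ ≤ q := by
  have hq : 0 ≤ q := hp.trans hpq
  unfold xpm
  split_ifs <;> simp [abs_of_nonneg, hp, hq, hpq, hε]

theorem xpm_one_eq_xpm_neg_one {i : Fin d} (hi : (i : ℕ) < d / 2) :
    xpm d δ p q 1 i = xpm d δ p q (-1) i := by
  unfold xpm
  split_ifs <;> rfl

theorem norm_xpm_one_add_xpm_neg_one_le (hp : 0 ≤ p) {i : Fin d} (hi : d / 2 - δ ≤ i) :
    ‖xpm d δ p q 1 i + xpm d δ p q (-1) i‖ ≤ 2 * p := by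
  unfold xpm
  split_ifs
  · omega
  all_goals simp [← two_mul, abs_of_nonneg, hp]

end Xpm

theorem fourier_entrywise_general (d δ a L : ℕ) (b p q : ℝ)
    (hd0 : 0 < d) (hδd : 4 * δ ≤ d)
    (hb : 4 < b) (hp : 0 < p) (hpq : p ≤ q) :
    ∀ (k : Fin (2 * δ - 1)) (ℓ : Fin L),
      (‖innerC (shift ((((ℓ : ℕ) + 1) * a : ℕ) : ℤ)
            (fourierMask d δ b k)) (xpm d δ p q 1)‖
          ≤ q * ((2 * δ - 1 : ℕ) : ℝ) ^ (-(1 : ℝ) / 4)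
              * (Real.exp (-1 / b) / (1 - Real.exp (-1 / b)))) ∧
      (‖innerC (shift ((((ℓ : ℕ) + 1) * a : ℕ) : ℤ)
            (fourierMask d δ b k)) (xpm d δ p q (-1))‖
          ≤ q * ((2 * δ - 1 : ℕ) : ℝ) ^ (-(1 : ℝ) / 4)
              * (Real.exp (-1 / b) / (1 - Real.exp (-1 / b)))) ∧
      ((1 + ((ℓ : ℕ) + 1) * a ≤ d - δ ∧ d - δ < δ + ((ℓ : ℕ) + 1) * a) →
        |‖innerC (shift ((((ℓ : ℕ) + 1) * a : ℕ) : ℤ)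
              (fourierMask d δ b k)) (xpm d δ p q 1)‖
            - ‖innerC (shift ((((ℓ : ℕ) + 1) * a : ℕ) : ℤ)
              (fourierMask d δ b k)) (xpm d δ p q (-1))‖|
          ≤ 2 * p * ((2 * δ - 1 : ℕ) : ℝ) ^ (-(1 : ℝ) / 4)
              * (Real.exp (-1 / b) / (1 - Real.exp (-1 / b)))) := by
  intro k ℓ
  have : NeZero d := ⟨hd0.ne'⟩
  set w := ((ℓ : ℕ) + 1) * a
  set u := shift (w : ℤ) (fourierMask d δ b k)
  have hu := (sum_norm_shift (w : ℤ) (fourierMask d δ b k)).trans_le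
    (sum_norm_fourierMask_le (by linarith) k)
  have hq : ∀ ε : ℝ, |ε| = 1 → ‖innerC u (xpm d δ p q ε)‖
      ≤ q * ((2 * δ - 1 : ℕ) : ℝ) ^ (-(1 : ℝ) / 4)
        * (Real.exp (-1 / b) / (1 - Real.exp (-1 / b))) := fun ε hε => by
    rw [mul_assoc]
    exact (norm_innerC_le fun i _ => norm_xpm_le hp.le hpq hε i).trans
      (mul_le_mul_of_nonneg_left hu (hp.le.trans hpq))
  refine ⟨hq 1 (by norm_num), hq (-1) (by norm_num), fun ⟨hw1, hw2⟩ => ?_⟩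
  have hsupp : ∀ i, u i ≠ 0 → d - w ≤ i ∧ (i : ℕ) < d - w + δ :=
    fun i => mem_Ico_of_shift_ne_zero (fun j => fourierMask_eq_zero k) (by omega) (by omega)
  have hdiff : |‖innerC u (xpm d δ p q 1)‖ - ‖innerC u (xpm d δ p q (-1))‖|
      ≤ 2 * p * ∑ i, ‖u i‖ := by
    rcases le_or_gt (d - w + δ) (d / 2) with hleft | hright
    · rw [innerC_congr_right fun i hi => xpm_one_eq_xpm_neg_one (by have := hsupp i hi; omega),
        sub_self, abs_zero]
      positivity
    · exact abs_norm_innerC_sub_norm_innerC_le fun i hi =>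
        norm_xpm_one_add_xpm_neg_one_le hp.le (by have := hsupp i hi; omega)
  rw [mul_assoc]
  exact hdiff.trans (mul_le_mul_of_nonneg_left hu (by positivity))

/-- With `s = e^{-1/b}`: (i) every windowed Fourier measurement of `x^±`
is at most `q (2δ-1)^{-1/4} s/(1-s)`; (ii) if `1 + ℓa ≤ d - δ < δ + ℓa` then the
measurements of `x⁺` and `x⁻` differ by at most `2p (2δ-1)^{-1/4} s/(1-s)`.
(Here `k, ℓ` stand for the 1-based indices `k+1, ℓ+1`.) -/
theorem fourier_entrywise (d δ a L : ℕ) (b p q : ℝ)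
    (hd0 : 0 < d) (hd : Even d) (hδ : 0 < δ) (hδd : 4 * δ ≤ d)
    (ha : 0 < a) (hL : 0 < L) (hdaL : d = a * L) (haδ : a < δ)
    (hb : 4 < b) (hp : 0 < p) (hpq : p ≤ q) :
    ∀ (k : Fin (2 * δ - 1)) (ℓ : Fin L),
      (‖innerC (shift ((((ℓ : ℕ) + 1) * a : ℕ) : ℤ)
            (fourierMask d δ b k)) (xpm d δ p q 1)‖
          ≤ q * ((2 * δ - 1 : ℕ) : ℝ) ^ (-(1 : ℝ) / 4)
              * (Real.exp (-1 / b) / (1 - Real.exp (-1 / b)))) ∧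
      (‖innerC (shift ((((ℓ : ℕ) + 1) * a : ℕ) : ℤ)
            (fourierMask d δ b k)) (xpm d δ p q (-1))‖
          ≤ q * ((2 * δ - 1 : ℕ) : ℝ) ^ (-(1 : ℝ) / 4)
              * (Real.exp (-1 / b) / (1 - Real.exp (-1 / b)))) ∧
      ((1 + ((ℓ : ℕ) + 1) * a ≤ d - δ ∧ d - δ < δ + ((ℓ : ℕ) + 1) * a) →
        |‖innerC (shift ((((ℓ : ℕ) + 1) * a : ℕ) : ℤ)
              (fourierMask d δ b k)) (xpm d δ p q 1)‖
            - ‖innerC (shift ((((ℓ : ℕ) + 1) * a : ℕ) : ℤ)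
              (fourierMask d δ b k)) (xpm d δ p q (-1))‖|
          ≤ 2 * p * ((2 * δ - 1 : ℕ) : ℝ) ^ (-(1 : ℝ) / 4)
              * (Real.exp (-1 / b) / (1 - Real.exp (-1 / b)))) :=
  fourier_entrywise_general d δ a L b p q hd0 hδd hb hp hpq
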